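/- arXiv:1312.7380 — 2 statements merged into one kernel-verified Lean document; each statement's English description precedes it below -/
import Mathlib

section
/- For every x = (z,u) ∈ ℝ^{2d}, 𝒰₂(x) = U''(z₂−z₁) e_{u₂} + (γ₁² − V''(z₁) − U''(z₂−z₁)) e_{u₁} − γ₁ e_{z₁}. -/
open scoped BigOperators

noncomputable section

abbrev E (d : ℕ) : Type := (Fin d → ℝ) × (Fin d → ℝ)

def ez (d : ℕ) (i : Fin d) : E d := (Pi.single i 1, 0)

def eu (d : ℕ) (i : Fin d) : E d := (0, Pi.single i 1)

noncomputable def ham (d : ℕ) (V U : ℝ → ℝ) (x : E d) : ℝ :=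
  (∑ i : Fin d, ((x.2 i) ^ 2 / 2 + V (x.1 i))) +
    ∑ i : Fin (d - 1),
      U (x.1 ⟨i.1 + 1, by have := i.2; omega⟩ - x.1 ⟨i.1, by have := i.2; omega⟩)

noncomputable def drift (d : ℕ) (γ₁ γd : ℝ) (V U : ℝ → ℝ) (x : E d) : E d :=
  (x.2, fun i =>
    -(fderiv ℝ (ham d V U) x (ez d i)) -
      (if i.1 = 0 then γ₁ * x.2 i else 0) -
      (if i.1 = d - 1 then γd * x.2 i else 0))

noncomputable def lie (d : ℕ) (X Y : E d → E d) (x : E d) : E d :=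
  fderiv ℝ Y x (X x) - fderiv ℝ X x (Y x)

noncomputable def UU (d : ℕ) (b : E d → E d) (v : E d) : ℕ → E d → E d
  | 0 => fun _ => v
  | n + 1 => lie d (UU d b v n) b

/-!
Because `𝒰₀ = e_{u₁}` is constant, `𝒰₁ = Db · e_{u₁}`, and since `b` is affine in `u` this is the
constant field `e_{z₁} - γ₁ e_{u₁}`; hence `𝒰₂ = Db · (e_{z₁} - γ₁ e_{u₁})`. The only nonlinear part
of `b` is `-∇_z H`, whose derivative is minus the Hessian of `H`. Writing `H` as a sum of functions
of single linear forms (momenta, positions, bond lengths `z_{j+1} - z_j`) makes the Hessian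
explicit: in direction `e_{z₁}` only `V(z₁)` and the bond `U(z₂ - z₁)` contribute.
Indices are 0-based in the code, so `z₁` is `x.1 ⟨0, _⟩`.
-/

section SumCompCLM

variable {F : Type*} [NormedAddCommGroup F] [NormedSpace ℝ F] {ι : Type*} [Fintype ι]
  {φ : ι → ℝ → ℝ} {ℓ : ι → F →L[ℝ] ℝ}

theorem hasFDerivAt_sum_comp_clm {x : F} (hφ : ∀ k, DifferentiableAt ℝ (φ k) (ℓ k x)) :
    HasFDerivAt (fun y => ∑ k, φ k (ℓ k y)) (∑ k, deriv (φ k) (ℓ k x) • ℓ k) x :=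
  HasFDerivAt.fun_sum fun k _ => (hφ k).hasDerivAt.comp_hasFDerivAt x (ℓ k).hasFDerivAt

theorem fderiv_sum_comp_clm_apply (hφ : ∀ k, Differentiable ℝ (φ k)) (x v : F) :
    fderiv ℝ (fun y => ∑ k, φ k (ℓ k y)) x v = ∑ k, deriv (φ k) (ℓ k x) * ℓ k v := by
  simp [(hasFDerivAt_sum_comp_clm fun k => hφ k _).fderiv]

theorem hasFDerivAt_fderiv_sum_comp_clm_apply (hφ : ∀ k, ContDiff ℝ 2 (φ k)) (x v : F) :
    HasFDerivAt (fun y => fderiv ℝ (fun y => ∑ k, φ k (ℓ k y)) y v)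
      (∑ k, (deriv (deriv (φ k)) (ℓ k x) * ℓ k v) • ℓ k) x := by
  simp_rw [fderiv_sum_comp_clm_apply fun k => (hφ k).differentiable two_ne_zero]
  convert hasFDerivAt_sum_comp_clm (φ := fun k t => deriv (φ k) t * ℓ k v) (x := x)
    fun k => ((hφ k).differentiable_deriv_two _).mul_const _ using 3
  simp

end SumCompCLM

theorem lie_const_left {d : ℕ} (v : E d) (Y : E d → E d) (x : E d) :
    lie d (fun _ => v) Y x = fderiv ℝ Y x v := by
  simp [lie]

theorem UU_two_of_fderiv_const {d : ℕ} {b : E d → E d} {v c : E d}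
    (h : ∀ y, fderiv ℝ b y v = c) (x : E d) : UU d b v 2 x = fderiv ℝ b x c := by
  have hUU₁ : UU d b v 1 = fun _ => c := funext fun y => (lie_const_left v b y).trans (h y)
  rw [UU, hUU₁, lie_const_left]

namespace OscillatorChain

open ContinuousLinearMap

variable {d : ℕ} {γ₁ γd : ℝ} {V U : ℝ → ℝ}

def zCoord (d : ℕ) (i : Fin d) : E d →L[ℝ] ℝ := (proj i).comp (fst ℝ _ _)

def uCoord (d : ℕ) (i : Fin d) : E d →L[ℝ] ℝ := (proj i).comp (snd ℝ _ _)

def bond (d : ℕ) (j : Fin (d - 1)) : E d →L[ℝ] ℝ :=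
  zCoord d ⟨j + 1, by omega⟩ - zCoord d ⟨j, by omega⟩

@[simp] theorem zCoord_apply (i : Fin d) (x : E d) : zCoord d i x = x.1 i := rfl

@[simp] theorem uCoord_apply (i : Fin d) (x : E d) : uCoord d i x = x.2 i := rfl

/-- The terms of `H = ∑ₖ φₖ ∘ ℓₖ`: the index `inl i` is the kinetic term of `u_i`, `inr (inl i)`
the on-site term `V(z_i)` and `inr (inr j)` the bond term `U(z_{j+1} - z_j)`. -/
def hamForm (d : ℕ) : Fin d ⊕ Fin d ⊕ Fin (d - 1) → E d →L[ℝ] ℝ :=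
  Sum.elim (uCoord d) (Sum.elim (zCoord d) (bond d))

def hamProfile (d : ℕ) (V U : ℝ → ℝ) : Fin d ⊕ Fin d ⊕ Fin (d - 1) → ℝ → ℝ :=
  Sum.elim (fun _ t => t ^ 2 / 2) (Sum.elim (fun _ => V) (fun _ => U))

theorem ham_eq_sum_comp_hamForm (V U : ℝ → ℝ) :
    ham d V U = fun x => ∑ k, hamProfile d V U k (hamForm d k x) := by
  funext x
  simp [ham, hamProfile, hamForm, bond, Fintype.sum_sum_type, Finset.sum_add_distrib, add_assoc]

theorem contDiff_hamProfile (hV : ContDiff ℝ 2 V) (hU : ContDiff ℝ 2 U) :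
    ∀ k, ContDiff ℝ 2 (hamProfile d V U k) := by
  rintro (_ | _ | _)
  · simp only [hamProfile, Sum.elim_inl]
    fun_prop
  · exact hV
  · exact hU

theorem hasFDerivAt_fderiv_ham_apply (hV : ContDiff ℝ 2 V) (hU : ContDiff ℝ 2 U) (x v : E d) :
    HasFDerivAt (fun y => fderiv ℝ (ham d V U) y v)
      (∑ k, (deriv (deriv (hamProfile d V U k)) (hamForm d k x) * hamForm d k v) • hamForm d k)
      x := by
  rw [ham_eq_sum_comp_hamForm]
  exact hasFDerivAt_fderiv_sum_comp_clm_apply (contDiff_hamProfile hV hU) x v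

theorem fderiv_fderiv_ham_ez_eu (hV : ContDiff ℝ 2 V) (hU : ContDiff ℝ 2 U) (i j : Fin d)
    (x : E d) : fderiv ℝ (fun y => fderiv ℝ (ham d V U) y (ez d i)) x (eu d j) = 0 := by
  simp [(hasFDerivAt_fderiv_ham_apply hV hU x _).fderiv, Fintype.sum_sum_type, hamForm, bond,
    ez, eu]

theorem fderiv_fderiv_ham_ez_ez_zero (hV : ContDiff ℝ 2 V) (hU : ContDiff ℝ 2 U) (hd : 2 ≤ d)
    (i : Fin d) (x : E d) :
    fderiv ℝ (fun y => fderiv ℝ (ham d V U) y (ez d i)) x (ez d ⟨0, by omega⟩) =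
      (if i.1 = 0 then
          deriv (deriv V) (x.1 ⟨0, by omega⟩) + deriv (deriv U) (x.1 ⟨1, hd⟩ - x.1 ⟨0, by omega⟩)
        else 0) -
        (if i.1 = 1 then deriv (deriv U) (x.1 ⟨1, hd⟩ - x.1 ⟨0, by omega⟩) else 0) := by
  simp [(hasFDerivAt_fderiv_ham_apply hV hU x _).fderiv, Fintype.sum_sum_type, hamForm, bond, ez,
    hamProfile, Pi.single_apply]
  -- only the bond `z₂ - z₁` involves `z₁` with a nonzero coefficient
  rw [Finset.sum_eq_single ⟨0, by omega⟩ (fun j _ hj => if_neg fun h => hj (Fin.ext h)) (by simp)]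
  rcases i with ⟨_ | _ | _, _⟩ <;> simp [Fin.ext_iff]

theorem fderiv_drift_apply (hV : ContDiff ℝ 2 V) (hU : ContDiff ℝ 2 U) (x w : E d) :
    fderiv ℝ (drift d γ₁ γd V U) x w =
      (w.2, fun i => -fderiv ℝ (fun y => fderiv ℝ (ham d V U) y (ez d i)) x w -
        (if i.1 = 0 then γ₁ * w.2 i else 0) - (if i.1 = d - 1 then γd * w.2 i else 0)) := by
  have hdamping (i : Fin d) (c : ℝ) (P : Prop) [Decidable P] :
      HasFDerivAt (fun y : E d => if P then c * y.2 i else 0)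
        (if P then c • uCoord d i else 0) x := by
    split_ifs
    · exact (uCoord d i).hasFDerivAt.const_mul c
    · exact hasFDerivAt_const _ _
  have hforce (i : Fin d) := (hasFDerivAt_fderiv_ham_apply hV hU x (ez d i)).differentiableAt
  have hdrift : HasFDerivAt (drift d γ₁ γd V U) _ x :=
    hasFDerivAt_snd.prodMk <| hasFDerivAt_pi.2 fun i =>
      ((hforce i).hasFDerivAt.neg.sub (hdamping i γ₁ (i.1 = 0))).sub
        (hdamping i γd (i.1 = d - 1))
  rw [hdrift.fderiv]
  ext i <;> simp
  split_ifs <;> rfl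

theorem fderiv_drift_eu_zero (hV : ContDiff ℝ 2 V) (hU : ContDiff ℝ 2 U) (hd : 2 ≤ d)
    (x : E d) :
    fderiv ℝ (drift d γ₁ γd V U) x (eu d ⟨0, by omega⟩) =
      ez d ⟨0, by omega⟩ - γ₁ • eu d ⟨0, by omega⟩ := by
  rw [fderiv_drift_apply hV hU]
  ext i
  · simp [eu, ez]
  · simp only [fderiv_fderiv_ham_ez_eu hV hU]
    simp [eu, ez, Pi.single_apply, Fin.ext_iff]
    split_ifs <;> first | omega | simp

end OscillatorChain

open OscillatorChain in
theorem stmt11 (d : ℕ) (hd : 3 ≤ d) (γ₁ γd : ℝ) (V U : ℝ → ℝ)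
    (hV : ContDiff ℝ (⊤ : ℕ∞) V) (hU : ContDiff ℝ (⊤ : ℕ∞) U) :
    ∀ x : E d,
      UU d (drift d γ₁ γd V U) (eu d ⟨0, by omega⟩) 2 x =
        deriv (deriv U) (x.1 ⟨1, by omega⟩ - x.1 ⟨0, by omega⟩) • eu d ⟨1, by omega⟩ +
          (γ₁ ^ 2 - deriv (deriv V) (x.1 ⟨0, by omega⟩) -
              deriv (deriv U) (x.1 ⟨1, by omega⟩ - x.1 ⟨0, by omega⟩)) • eu d ⟨0, by omega⟩ -
          γ₁ • ez d ⟨0, by omega⟩ := by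
  intro x
  have hd₂ : 2 ≤ d := by omega
  have hV₂ : ContDiff ℝ 2 V := hV.of_le (WithTop.coe_le_coe.2 le_top)
  have hU₂ : ContDiff ℝ 2 U := hU.of_le (WithTop.coe_le_coe.2 le_top)
  rw [UU_two_of_fderiv_const (fderiv_drift_eu_zero hV₂ hU₂ hd₂), fderiv_drift_apply hV₂ hU₂]
  simp only [map_sub, map_smul, fderiv_fderiv_ham_ez_eu hV₂ hU₂,
    fderiv_fderiv_ham_ez_ez_zero hV₂ hU₂ hd₂]
  ext i
  · simp [eu, ez]
  · simp [eu, ez, Pi.single_apply, Fin.ext_iff]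
    split_ifs <;> first | omega | ring
end
end

section
/- For every k with 1 ≤ k ≤ d−2, there exist C^∞ functions f_{k,i}, g_{k,i}, f̃_{k,i}, g̃_{k,i} (1 ≤ i ≤ k) and h_k on ℝ^{2d} such that for all x = (z,u) ∈ ℝ^{2d}: 𝒰_{2k}(x) = (Π_{j=1}^{k} U''(z_{j+1}−z_j)) e_{u_{k+1}} + Σ_{i=1}^{k} (f_{k,i}(x) e_{z_i} + g_{k,i}(x) e_{u_i}) and 𝒰_{2k+1}(x) = (Π_{j=1}^{k} U''(z_{j+1}−z_j)) e_{z_{k+1}} + Σ_{i=1}^{k} (f̃_{k,i}(x) e_{z_i} + g̃_{k,i}(x) e_{u_i}) + h_k(x) e_{u_{k+1}}. -/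
open scoped BigOperators

noncomputable section

/-!
The drift is `b(z, u) = (u, -∇_z H - Γ u)` with `Γ` diagonal, and the Hessian of the chain
potential is tridiagonal. In `[X, b] = Db X - DX b` the second term has no component along a
coordinate on which `X` vanishes identically. Hence bracketing with `b` moves a leading
`u_k`-component `c` unchanged to the `z_k`-slot (the `u` in the first half of `b`), and a leading
`z_k`-component `c` to the `u_{k+1}`-slot as `U''(z_{k+1} - z_k) c` (the off-diagonal Hessian
entry), while tridiagonality keeps every coordinate beyond this front equal to zero.
-/

open scoped ContDiff

section FDerivCoordinates

variable {𝕜 F G H : Type*} [NontriviallyNormedField 𝕜] [NormedAddCommGroup F] [NormedSpace 𝕜 F]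
  [NormedAddCommGroup G] [NormedSpace 𝕜 G] [NormedAddCommGroup H] [NormedSpace 𝕜 H]

theorem ContinuousLinearMap.map_fderiv_apply_of_hasFDerivAt (L : G →L[𝕜] H) {X : F → G}
    {x : F} {L' : F →L[𝕜] H} (hX : DifferentiableAt 𝕜 X x)
    (hLX : HasFDerivAt (fun y => L (X y)) L' x) (v : F) : L (fderiv 𝕜 X x v) = L' v := by
  rw [hLX.unique (L.hasFDerivAt.comp x hX.hasFDerivAt)]
  rfl

theorem ContinuousLinearMap.map_fderiv_apply_eq_zero (L : G →L[𝕜] H) {X : F → G}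
    (h : ∀ y, L (X y) = 0) (x v : F) : L (fderiv 𝕜 X x v) = 0 := by
  by_cases hX : DifferentiableAt 𝕜 X x
  · refine L.map_fderiv_apply_of_hasFDerivAt hX (L' := 0) ?_ v
    simpa only [h] using hasFDerivAt_const (0 : H) x
  · simp [fderiv_zero_of_not_differentiableAt hX]

end FDerivCoordinates

namespace OscillatorChain

variable {d : ℕ}

def bondLeft (i : Fin (d - 1)) : Fin d := ⟨i.1, by omega⟩

def bondRight (i : Fin (d - 1)) : Fin d := ⟨i.1 + 1, by omega⟩

@[simp] theorem val_bondLeft (i : Fin (d - 1)) : (bondLeft i).1 = i.1 := rfl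

@[simp] theorem val_bondRight (i : Fin (d - 1)) : (bondRight i).1 = i.1 + 1 := rfl

def coordZ (j : Fin d) : E d →L[ℝ] ℝ :=
  (ContinuousLinearMap.proj j).comp (ContinuousLinearMap.fst ℝ _ _)

def coordU (j : Fin d) : E d →L[ℝ] ℝ :=
  (ContinuousLinearMap.proj j).comp (ContinuousLinearMap.snd ℝ _ _)

@[simp] theorem coordZ_apply (j : Fin d) (x : E d) : coordZ j x = x.1 j := rfl

@[simp] theorem coordU_apply (j : Fin d) (x : E d) : coordU j x = x.2 j := rfl

variable (V U : ℝ → ℝ)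

def hamFDeriv (x : E d) : E d →L[ℝ] ℝ :=
  (∑ i, (x.2 i • coordU i + deriv V (x.1 i) • coordZ i)) +
    ∑ b, deriv U (x.1 (bondRight b) - x.1 (bondLeft b)) •
      (coordZ (bondRight b) - coordZ (bondLeft b))

/-- The bracket `δ(bondRight b = j) - δ(bondLeft b = j)` is the derivative of the bond length
`z_{b+1} - z_b` in `z_j`. -/
def dHdz (j : Fin d) (x : E d) : ℝ :=
  deriv V (x.1 j) + ∑ b, deriv U (x.1 (bondRight b) - x.1 (bondLeft b)) *
    ((if bondRight b = j then 1 else 0) - (if bondLeft b = j then 1 else 0))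

def hessRow (j : Fin d) (x : E d) : E d →L[ℝ] ℝ :=
  deriv (deriv V) (x.1 j) • coordZ j + ∑ b,
    (deriv (deriv U) (x.1 (bondRight b) - x.1 (bondLeft b)) *
      ((if bondRight b = j then 1 else 0) - (if bondLeft b = j then 1 else 0))) •
      (coordZ (bondRight b) - coordZ (bondLeft b))

variable {V U}

theorem hasFDerivAt_ham (hV : Differentiable ℝ V) (hU : Differentiable ℝ U) (x : E d) :
    HasFDerivAt (ham d V U) (hamFDeriv V U x) x := by
  refine HasFDerivAt.add (HasFDerivAt.fun_sum fun i _ => ?_) (HasFDerivAt.fun_sum fun b _ => ?_)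
  · have hsq : HasDerivAt (fun t : ℝ => t ^ 2 / 2) (x.2 i) (x.2 i) := by
      simpa using (hasDerivAt_pow 2 (x.2 i)).div_const 2
    exact (hsq.comp_hasFDerivAt x (coordU i).hasFDerivAt).add
      ((hV _).hasDerivAt.comp_hasFDerivAt x (coordZ i).hasFDerivAt)
  · exact (hU _).hasDerivAt.comp_hasFDerivAt x
      ((coordZ (bondRight b)).hasFDerivAt.sub (coordZ (bondLeft b)).hasFDerivAt)

theorem fderiv_ham_apply_ez (hV : Differentiable ℝ V) (hU : Differentiable ℝ U) (x : E d)
    (j : Fin d) : fderiv ℝ (ham d V U) x (ez d j) = dHdz V U j x := by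
  rw [(hasFDerivAt_ham hV hU x).fderiv]
  simp [hamFDeriv, dHdz, ez, Pi.single_apply, mul_ite, Finset.sum_ite_eq']

theorem hasFDerivAt_dHdz (hV : Differentiable ℝ (deriv V)) (hU : Differentiable ℝ (deriv U))
    (j : Fin d) (x : E d) : HasFDerivAt (dHdz V U j) (hessRow V U j x) x := by
  refine ((hV _).hasDerivAt.comp_hasFDerivAt x (coordZ j).hasFDerivAt).add
    (HasFDerivAt.fun_sum fun b _ => ?_)
  have h := ((hU _).hasDerivAt.comp_hasFDerivAt x ((coordZ (bondRight b)).hasFDerivAt.sub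
    (coordZ (bondLeft b)).hasFDerivAt)).mul_const
      ((if bondRight b = j then (1 : ℝ) else 0) - (if bondLeft b = j then 1 else 0))
  rwa [smul_smul, mul_comm] at h

theorem hessRow_apply (j : Fin d) (x w : E d) :
    hessRow V U j x w = deriv (deriv V) (x.1 j) * w.1 j + ∑ b,
      deriv (deriv U) (x.1 (bondRight b) - x.1 (bondLeft b)) *
        ((if bondRight b = j then 1 else 0) - (if bondLeft b = j then 1 else 0)) *
        (w.1 (bondRight b) - w.1 (bondLeft b)) := by
  simp [hessRow]

/-- The Hessian is tridiagonal: row `j` only sees `z_{j-1}, z_j, z_{j+1}`. -/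
theorem hessRow_apply_eq_zero {j : Fin d} {w : E d}
    (hw : ∀ l : Fin d, j.1 ≤ l.1 + 1 → w.1 l = 0) (x : E d) : hessRow V U j x w = 0 := by
  rw [hessRow_apply, hw j (by omega), mul_zero, zero_add]
  refine Finset.sum_eq_zero fun b _ => ?_
  by_cases hb : j.1 ≤ b.1 + 1
  · rw [hw (bondRight b) (show j.1 ≤ b.1 + 1 + 1 by omega), hw (bondLeft b) hb, sub_self, mul_zero]
  · have hR : bondRight b ≠ j := fun h => hb (by rw [← h, val_bondRight])
    have hL : bondLeft b ≠ j := fun h => hb (by rw [← h, val_bondLeft]; omega)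
    simp [hR, hL]

theorem hessRow_succ_apply {k : ℕ} (hk : k + 1 < d) {w : E d}
    (hw : ∀ l : Fin d, k + 1 ≤ l.1 → w.1 l = 0) (x : E d) :
    hessRow V U ⟨k + 1, hk⟩ x w =
      -(deriv (deriv U) (x.1 ⟨k + 1, hk⟩ - x.1 ⟨k, by omega⟩) * w.1 ⟨k, by omega⟩) := by
  rw [hessRow_apply, hw _ le_rfl, mul_zero, zero_add,
    Finset.sum_eq_single (⟨k, by omega⟩ : Fin (d - 1))]
  · simp [bondRight, bondLeft, hw ⟨k + 1, hk⟩ le_rfl]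
  · intro b _ hb
    by_cases hbk : k + 1 ≤ b.1
    · rw [hw (bondRight b) (show k + 1 ≤ b.1 + 1 by omega), hw (bondLeft b) hbk, sub_self,
        mul_zero]
    · have hR : bondRight b ≠ ⟨k + 1, hk⟩ := fun h =>
        hb (Fin.ext (by simpa using congrArg Fin.val h))
      have hL : bondLeft b ≠ ⟨k + 1, hk⟩ := fun h => hbk (by rw [← val_bondLeft, h])
      simp [hR, hL]
  · simp

theorem contDiff_ham (hV : ContDiff ℝ ∞ V) (hU : ContDiff ℝ ∞ U) : ContDiff ℝ ∞ (ham d V U) := by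
  unfold ham
  fun_prop

variable {γ₁ γd : ℝ}

theorem contDiff_drift (hV : ContDiff ℝ ∞ V) (hU : ContDiff ℝ ∞ U) :
    ContDiff ℝ ∞ (drift d γ₁ γd V U) := by
  have hH := (contDiff_ham (d := d) hV hU).fderiv_right (m := ∞) le_rfl
  unfold drift
  refine contDiff_snd.prodMk (contDiff_pi.mpr fun j => ?_)
  refine ((hH.clm_apply contDiff_const).neg.sub ?_).sub ?_ <;> split_ifs <;> fun_prop

theorem fderiv_drift_apply_fst (hV : ContDiff ℝ ∞ V) (hU : ContDiff ℝ ∞ U) (x w : E d) :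
    (fderiv ℝ (drift d γ₁ γd V U) x w).1 = w.2 :=
  (ContinuousLinearMap.fst ℝ _ _).map_fderiv_apply_of_hasFDerivAt
    ((contDiff_drift hV hU).differentiable (by simp) x)
    (ContinuousLinearMap.snd ℝ (Fin d → ℝ) (Fin d → ℝ)).hasFDerivAt w

theorem fderiv_drift_apply_snd (hV : ContDiff ℝ ∞ V) (hU : ContDiff ℝ ∞ U) {j : Fin d} {w : E d}
    (hw : w.2 j = 0) (x : E d) :
    (fderiv ℝ (drift d γ₁ γd V U) x w).2 j = -hessRow V U j x w := by
  have hV' := contDiff_infty_iff_deriv.mp hV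
  have hU' := contDiff_infty_iff_deriv.mp hU
  set c := (if j.1 = 0 then γ₁ else 0) + (if j.1 = d - 1 then γd else 0)
  have hsnd : (fun y => (drift d γ₁ γd V U y).2 j) = fun y => -dHdz V U j y - c * y.2 j := by
    funext y
    simp only [drift, c, fderiv_ham_apply_ez hV'.1 hU'.1]
    split_ifs <;> ring
  have hD : HasFDerivAt (fun y => coordU j (drift d γ₁ γd V U y))
      (-hessRow V U j x - c • coordU j) x := by
    simp only [coordU_apply, hsnd]
    exact (hasFDerivAt_dHdz (hV'.2.differentiable (by simp)) (hU'.2.differentiable (by simp))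
      j x).neg.sub ((coordU j).hasFDerivAt.const_mul c)
  simpa [hw] using (coordU j).map_fderiv_apply_of_hasFDerivAt
    ((contDiff_drift hV hU).differentiable (by simp) x) hD w

theorem lie_drift_apply_fst (hV : ContDiff ℝ ∞ V) (hU : ContDiff ℝ ∞ U) {X : E d → E d}
    {j : Fin d} (hX : ∀ y, (X y).1 j = 0) (x : E d) :
    (lie d X (drift d γ₁ γd V U) x).1 j = (X x).2 j := by
  have h := (coordZ j).map_fderiv_apply_eq_zero hX x (drift d γ₁ γd V U x)
  simp only [coordZ_apply] at h
  simp [lie, fderiv_drift_apply_fst hV hU, h]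

theorem lie_drift_apply_snd (hV : ContDiff ℝ ∞ V) (hU : ContDiff ℝ ∞ U) {X : E d → E d}
    {j : Fin d} (hX : ∀ y, (X y).2 j = 0) (x : E d) :
    (lie d X (drift d γ₁ γd V U) x).2 j = -hessRow V U j x (X x) := by
  have h := (coordU j).map_fderiv_apply_eq_zero hX x (drift d γ₁ γd V U x)
  simp only [coordU_apply] at h
  simp [lie, fderiv_drift_apply_snd hV hU (hX x), h]

theorem contDiff_UU {b : E d → E d} (hb : ContDiff ℝ ∞ b) (v : E d) (n : ℕ) :
    ContDiff ℝ ∞ (UU d b v n) := by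
  induction n with
  | zero => exact contDiff_const
  | succ n ih =>
    exact ((hb.fderiv_right (m := ∞) le_rfl).clm_apply ih).sub
      ((ih.fderiv_right (m := ∞) le_rfl).clm_apply hb)

variable (U)

def curvatureProd (k : ℕ) (hk : k < d) (x : E d) : ℝ :=
  ∏ j : Fin k, deriv (deriv U)
    (x.1 ⟨j.1 + 1, by have := j.2; omega⟩ - x.1 ⟨j.1, by have := j.2; omega⟩)

def VanishesFrom (m : ℕ) (w : Fin d → ℝ) : Prop := ∀ j : Fin d, m ≤ j.1 → w j = 0

/-- The shape of `𝒰_{2k}`. -/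
def EvenForm (k : ℕ) (hk : k < d) (X : E d → E d) : Prop :=
  ∀ x, VanishesFrom k (X x).1 ∧ VanishesFrom (k + 1) (X x).2 ∧
    (X x).2 ⟨k, hk⟩ = curvatureProd U k hk x

/-- The shape of `𝒰_{2k+1}`. -/
def OddForm (k : ℕ) (hk : k < d) (X : E d → E d) : Prop :=
  ∀ x, VanishesFrom (k + 1) (X x).1 ∧ VanishesFrom (k + 1) (X x).2 ∧
    (X x).1 ⟨k, hk⟩ = curvatureProd U k hk x

variable {U}

theorem curvatureProd_succ {k : ℕ} (hk : k + 1 < d) (x : E d) :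
    curvatureProd U (k + 1) hk x =
      curvatureProd U k (by omega) x * deriv (deriv U) (x.1 ⟨k + 1, hk⟩ - x.1 ⟨k, by omega⟩) :=
  Fin.prod_univ_castSucc _

theorem evenForm_eu_zero (h0 : 0 < d) : EvenForm U 0 h0 (fun _ => eu d ⟨0, h0⟩) := by
  refine fun x => ⟨fun j _ => rfl, fun j hj => ?_, by simp [eu, curvatureProd]⟩
  exact Pi.single_eq_of_ne (fun h => by simp [h] at hj) _

theorem EvenForm.lie_drift (hV : ContDiff ℝ ∞ V) (hU : ContDiff ℝ ∞ U) {k : ℕ} {hk : k < d}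
    {X : E d → E d} (h : EvenForm U k hk X) :
    OddForm U k hk (lie d X (drift d γ₁ γd V U)) := by
  intro x
  refine ⟨fun j hj => ?_, fun j hj => ?_, ?_⟩
  · rw [lie_drift_apply_fst hV hU (fun y => (h y).1 j (by omega))]
    exact (h x).2.1 j hj
  · rw [lie_drift_apply_snd hV hU (fun y => (h y).2.1 j hj),
      hessRow_apply_eq_zero (fun l hl => (h x).1 l (by omega)), neg_zero]
  · rw [lie_drift_apply_fst hV hU (fun y => (h y).1 _ le_rfl)]
    exact (h x).2.2

theorem OddForm.lie_drift (hV : ContDiff ℝ ∞ V) (hU : ContDiff ℝ ∞ U) {k : ℕ} (hk : k + 1 < d)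
    {X : E d → E d} (h : OddForm U k (by omega) X) :
    EvenForm U (k + 1) hk (lie d X (drift d γ₁ γd V U)) := by
  intro x
  refine ⟨fun j hj => ?_, fun j hj => ?_, ?_⟩
  · rw [lie_drift_apply_fst hV hU (fun y => (h y).1 j hj)]
    exact (h x).2.1 j hj
  · rw [lie_drift_apply_snd hV hU (fun y => (h y).2.1 j (by omega)),
      hessRow_apply_eq_zero (fun l hl => (h x).1 l (by omega)), neg_zero]
  · rw [lie_drift_apply_snd hV hU (fun y => (h y).2.1 _ le_rfl),
      hessRow_succ_apply hk (h x).1, (h x).2.2, curvatureProd_succ, neg_neg, mul_comm]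

theorem UU_forms (hV : ContDiff ℝ ∞ V) (hU : ContDiff ℝ ∞ U) (k : ℕ) (hk : k < d) :
    EvenForm U k hk (UU d (drift d γ₁ γd V U) (eu d ⟨0, by omega⟩) (2 * k)) ∧
      OddForm U k hk (UU d (drift d γ₁ γd V U) (eu d ⟨0, by omega⟩) (2 * k + 1)) := by
  induction k with
  | zero =>
    have h := evenForm_eu_zero (U := U) hk
    exact ⟨h, h.lie_drift hV hU⟩
  | succ k ih =>
    have h : EvenForm U (k + 1) hk
        (UU d (drift d γ₁ γd V U) (eu d ⟨0, by omega⟩) (2 * (k + 1))) :=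
      (ih (by omega)).2.lie_drift hV hU hk
    exact ⟨h, h.lie_drift hV hU⟩

theorem eq_sum_of_vanishesFrom {m : ℕ} (hm : m ≤ d) {w : E d} (h₁ : VanishesFrom m w.1)
    (h₂ : VanishesFrom m w.2) :
    w = ∑ i : Fin m, (w.1 (Fin.castLE hm i) • ez d (Fin.castLE hm i) +
      w.2 (Fin.castLE hm i) • eu d (Fin.castLE hm i)) := by
  set f : Fin d → E d := fun l => w.1 l • ez d l + w.2 l • eu d l
  have hf : ∀ l ∉ Finset.univ.map (Fin.castLEEmb hm), f l = 0 := by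
    intro l hl
    have hml : m ≤ l.1 := by
      by_contra hlt
      exact hl (Finset.mem_map.mpr ⟨⟨l.1, by omega⟩, Finset.mem_univ _, rfl⟩)
    simp [f, h₁ l hml, h₂ l hml]
  calc w = ∑ l, f l := by ext j <;> simp [f, ez, eu, Prod.fst_sum, Prod.snd_sum, Pi.single_apply]
    _ = ∑ l ∈ Finset.univ.map (Fin.castLEEmb hm), f l :=
      (Finset.sum_subset (Finset.subset_univ _) fun l _ hl => hf l hl).symm
    _ = ∑ i, f (Fin.castLE hm i) := Finset.sum_map _ _ _

theorem eq_sum_add_of_vanishesFrom {k : ℕ} (hk : k < d) {w : E d}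
    (h₁ : VanishesFrom (k + 1) w.1) (h₂ : VanishesFrom (k + 1) w.2) :
    w = ∑ i : Fin k, (w.1 ⟨i.1, by omega⟩ • ez d ⟨i.1, by omega⟩ +
      w.2 ⟨i.1, by omega⟩ • eu d ⟨i.1, by omega⟩) +
      (w.1 ⟨k, hk⟩ • ez d ⟨k, hk⟩ + w.2 ⟨k, hk⟩ • eu d ⟨k, hk⟩) :=
  (eq_sum_of_vanishesFrom hk h₁ h₂).trans (Fin.sum_univ_castSucc _)

theorem EvenForm.apply_eq {k : ℕ} {hk : k < d} {X : E d → E d} (h : EvenForm U k hk X)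
    (x : E d) :
    X x = curvatureProd U k hk x • eu d ⟨k, hk⟩ + ∑ i : Fin k, ((X x).1 ⟨i.1, by omega⟩ •
      ez d ⟨i.1, by omega⟩ + (X x).2 ⟨i.1, by omega⟩ • eu d ⟨i.1, by omega⟩) := by
  obtain ⟨h₁, h₂, hk'⟩ := h x
  conv_lhs => rw [eq_sum_add_of_vanishesFrom hk (fun j hj => h₁ j (by omega)) h₂]
  rw [h₁ _ le_rfl, hk', zero_smul, zero_add, add_comm]

theorem OddForm.apply_eq {k : ℕ} {hk : k < d} {X : E d → E d} (h : OddForm U k hk X)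
    (x : E d) :
    X x = curvatureProd U k hk x • ez d ⟨k, hk⟩ + ∑ i : Fin k, ((X x).1 ⟨i.1, by omega⟩ •
      ez d ⟨i.1, by omega⟩ + (X x).2 ⟨i.1, by omega⟩ • eu d ⟨i.1, by omega⟩) +
      (X x).2 ⟨k, hk⟩ • eu d ⟨k, hk⟩ := by
  obtain ⟨h₁, h₂, hk'⟩ := h x
  conv_lhs => rw [eq_sum_add_of_vanishesFrom hk h₁ h₂]
  rw [hk']
  abel

end OscillatorChain

open OscillatorChain in
theorem stmt13 (d : ℕ) (hd : 3 ≤ d) (γ₁ γd : ℝ) (V U : ℝ → ℝ)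
    (hV : ContDiff ℝ (⊤ : ℕ∞) V) (hU : ContDiff ℝ (⊤ : ℕ∞) U)
    (k : ℕ) (hk2 : k ≤ d - 2) :
    ∃ f g ft gt : Fin k → E d → ℝ, ∃ h : E d → ℝ,
      (∀ i, ContDiff ℝ (⊤ : ℕ∞) (f i)) ∧ (∀ i, ContDiff ℝ (⊤ : ℕ∞) (g i)) ∧
      (∀ i, ContDiff ℝ (⊤ : ℕ∞) (ft i)) ∧ (∀ i, ContDiff ℝ (⊤ : ℕ∞) (gt i)) ∧
      ContDiff ℝ (⊤ : ℕ∞) h ∧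
      (∀ x : E d,
        UU d (drift d γ₁ γd V U) (eu d ⟨0, by omega⟩) (2 * k) x =
          (∏ j : Fin k, deriv (deriv U)
              (x.1 ⟨j.1 + 1, by have := j.2; omega⟩ - x.1 ⟨j.1, by have := j.2; omega⟩)) •
            eu d ⟨k, by omega⟩ +
          ∑ i : Fin k, (f i x • ez d ⟨i.1, by have := i.2; omega⟩ +
            g i x • eu d ⟨i.1, by have := i.2; omega⟩)) ∧
      (∀ x : E d,
        UU d (drift d γ₁ γd V U) (eu d ⟨0, by omega⟩) (2 * k + 1) x =
          (∏ j : Fin k, deriv (deriv U)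
              (x.1 ⟨j.1 + 1, by have := j.2; omega⟩ - x.1 ⟨j.1, by have := j.2; omega⟩)) •
            ez d ⟨k, by omega⟩ +
          ∑ i : Fin k, (ft i x • ez d ⟨i.1, by have := i.2; omega⟩ +
            gt i x • eu d ⟨i.1, by have := i.2; omega⟩) +
          h x • eu d ⟨k, by omega⟩) := by
  set X := UU d (drift d γ₁ γd V U) (eu d ⟨0, by omega⟩)
  have hX (n : ℕ) : ContDiff ℝ ∞ (X n) := contDiff_UU (contDiff_drift hV hU) _ n
  have hk : k < d := by omega
  obtain ⟨hEven, hOdd⟩ := UU_forms (γ₁ := γ₁) (γd := γd) hV hU k hk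
  exact ⟨fun i x => (X (2 * k) x).1 (i.castLE hk.le), fun i x => (X (2 * k) x).2 (i.castLE hk.le),
    fun i x => (X (2 * k + 1) x).1 (i.castLE hk.le),
    fun i x => (X (2 * k + 1) x).2 (i.castLE hk.le),
    fun x => (X (2 * k + 1) x).2 ⟨k, hk⟩,
    fun i => contDiff_pi.mp (hX _).fst _, fun i => contDiff_pi.mp (hX _).snd _,
    fun i => contDiff_pi.mp (hX _).fst _, fun i => contDiff_pi.mp (hX _).snd _,
    contDiff_pi.mp (hX _).snd _, hEven.apply_eq, hOdd.apply_eq⟩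
end
end
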